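/- Let Ω ⊆ ℝⁿ, f ∈ C¹(Ω, ℝⁿ), g ∈ C¹(Ω, ℝ^m), Q a positive definite m×m matrix, V ∈ C¹(Ω, ℝ) and C > 0 such that C·g(x)ᵀQg(x) − (Dg(x)f(x))ᵀQ(Dg(x)f(x)) + ∇V(x)·f(x) ≥ 0 for all x ∈ Ω. Then every T-periodic solution x(t) of x' = f(x) satisfying ∫₀^T g(x(t)) dt = 0 and ∫₀^T |g(x(t))|² dt ≠ 0 has T ≥ 2π/√C. -/

import Mathlib

open Matrix
open scoped Real
open MeasureTheory Complex Set Finset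
open scoped MatrixOrder

/-!
Put `φ = g ∘ x`, so that `φ' = Dg(x) f(x)`. Integrated over a period, the term `∇V·f` contributes
`V(x(T)) - V(x(0)) = 0`, so the hypothesis gives `∫ φ'ᵀQφ' ≤ C ∫ φᵀQφ`. Writing `Q = BᵀB`, the
quadratic forms become `|Bφ|²` and `|Bφ'|²`, and Wirtinger's inequality for the mean-zero periodic
components of `Bφ` gives `(2π/T)² ∫ φᵀQφ ≤ ∫ φ'ᵀQφ'`. Wirtinger's inequality itself is Parseval's
identity together with `ĉₙ(u') = (2πin/T) ĉₙ(u)` and `ĉ₀(u) = 0`. As `∫ φᵀQφ > 0`, `(2π/T)² ≤ C`.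
-/

theorem ContinuousOn.memLp_restrict_Ioc {E : Type*} [NormedAddCommGroup E] {u : ℝ → E} {a b : ℝ}
    (hu : ContinuousOn u (Icc a b)) (p : ENNReal) : MemLp u p (volume.restrict (Ioc a b)) := by
  obtain ⟨C, hC⟩ := isCompact_Icc.exists_bound_of_continuousOn hu
  exact .of_bound ((hu.mono Ioc_subset_Icc_self).aestronglyMeasurable measurableSet_Ioc) C
    (ae_restrict_of_forall_mem measurableSet_Ioc fun t ht => hC t (Ioc_subset_Icc_self ht))

theorem norm_fourierCoeffOn_of_hasDerivAt {a b : ℝ} (hab : a < b) {u u' : ℝ → ℂ}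
    (hu : ∀ t ∈ Icc a b, HasDerivAt u (u' t) t) (hu' : IntervalIntegrable u' volume a b)
    (hper : u a = u b) {n : ℤ} (hn : n ≠ 0) :
    ‖fourierCoeffOn hab u' n‖ = 2 * π * |(n : ℝ)| / (b - a) * ‖fourierCoeffOn hab u n‖ := by
  have h := fourierCoeffOn_of_hasDerivAt hab hn (by rwa [uIcc_of_le hab.le]) hu'
  rw [hper, sub_self, mul_zero, zero_sub] at h
  have hba : ((b - a : ℝ) : ℂ) ≠ 0 := ofReal_ne_zero.2 (sub_pos.2 hab).ne'
  have hn' : (n : ℂ) ≠ 0 := Int.cast_ne_zero.2 hn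
  have hcoeff :
      fourierCoeffOn hab u' n = (2 * π * I * n / (b - a : ℝ)) * fourierCoeffOn hab u n := by
    rw [h]; field_simp; push_cast; ring
  rw [hcoeff, norm_mul, norm_div, norm_real, Real.norm_of_nonneg (sub_pos.2 hab).le]
  simp [abs_of_pos Real.pi_pos]

theorem fourierCoeffOn_zero {a b : ℝ} (hab : a < b) (u : ℝ → ℂ) :
    fourierCoeffOn hab u 0 = (1 / (b - a)) • ∫ t in a..b, u t := by
  simp [fourierCoeffOn_eq_integral]

theorem wirtinger_inequality {a b : ℝ} (hab : a < b) {u u' : ℝ → ℂ}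
    (hu : ∀ t ∈ Icc a b, HasDerivAt u (u' t) t) (hu' : ContinuousOn u' (Icc a b))
    (hper : u a = u b) (hmean : ∫ t in a..b, u t = 0) :
    (2 * π / (b - a)) ^ 2 * ∫ t in a..b, ‖u t‖ ^ 2 ≤ ∫ t in a..b, ‖u' t‖ ^ 2 := by
  have hL : 0 < b - a := sub_pos.2 hab
  have hcont : ContinuousOn u (Icc a b) := fun t ht => (hu t ht).continuousAt.continuousWithinAt
  have hParseval := hasSum_sq_fourierCoeffOn hab (hcont.memLp_restrict_Ioc 2)
  have hParseval' := hasSum_sq_fourierCoeffOn hab (hu'.memLp_restrict_Ioc 2)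
  have hcoeff : ∀ n : ℤ, (2 * π / (b - a)) ^ 2 * ‖fourierCoeffOn hab u n‖ ^ 2
      ≤ ‖fourierCoeffOn hab u' n‖ ^ 2 := by
    intro n
    rcases eq_or_ne n 0 with rfl | hn
    · rw [fourierCoeffOn_zero hab u, hmean, smul_zero, norm_zero, zero_pow two_ne_zero, mul_zero]
      positivity
    rw [norm_fourierCoeffOn_of_hasDerivAt hab hu (hu'.intervalIntegrable_of_Icc hab.le) hper hn]
    have h1 : (1 : ℝ) ≤ |(n : ℝ)| := by exact_mod_cast Int.one_le_abs hn
    have h2 : 2 * π / (b - a) ≤ 2 * π * |(n : ℝ)| / (b - a) := by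
      gcongr ?_ / _
      exact le_mul_of_one_le_right (by positivity) h1
    rw [mul_pow]
    gcongr
  have hsum := hasSum_le hcoeff (hParseval.mul_left _) hParseval'
  simp only [smul_eq_mul] at hsum
  rwa [← mul_assoc, mul_comm _ (b - a)⁻¹, mul_assoc, mul_le_mul_iff_of_pos_left (inv_pos.2 hL)]
    at hsum

theorem wirtinger_inequality_real {a b : ℝ} (hab : a < b) {u u' : ℝ → ℝ}
    (hu : ∀ t ∈ Icc a b, HasDerivAt u (u' t) t) (hu' : ContinuousOn u' (Icc a b))
    (hper : u a = u b) (hmean : ∫ t in a..b, u t = 0) :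
    (2 * π / (b - a)) ^ 2 * ∫ t in a..b, u t ^ 2 ≤ ∫ t in a..b, u' t ^ 2 := by
  have := wirtinger_inequality hab (u := fun t => (u t : ℂ)) (u' := fun t => (u' t : ℂ))
    (fun t ht => (hu t ht).ofReal_comp) (continuous_ofReal.comp_continuousOn hu')
    (congrArg _ hper) (by rw [intervalIntegral.integral_ofReal, hmean, ofReal_zero])
  simpa only [norm_real, Real.norm_eq_abs, sq_abs] using this

theorem Matrix.PosSemidef.exists_dotProduct_mulVec_self_eq_sum_sq {ι : Type*} [Fintype ι]
    {Q : Matrix ι ι ℝ} (hQ : Q.PosSemidef) :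
    ∃ B : Matrix ι ι ℝ, ∀ v, v ⬝ᵥ Q *ᵥ v = ∑ j, (B *ᵥ v) j ^ 2 := by
  classical
  obtain ⟨B, rfl⟩ := CStarAlgebra.nonneg_iff_eq_star_mul_self.mp hQ.nonneg
  refine ⟨B, fun v => ?_⟩
  rw [← mulVec_mulVec, dotProduct_mulVec, star_eq_conjTranspose, vecMul_conjTranspose]
  simp [dotProduct, sq]

theorem Matrix.PosSemidef.wirtinger_inequality {ι : Type*} [Fintype ι] {Q : Matrix ι ι ℝ}
    (hQ : Q.PosSemidef) {a b : ℝ} (hab : a < b) {u u' : ℝ → ι → ℝ}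
    (hu : ∀ t ∈ Icc a b, HasDerivAt u (u' t) t) (hu' : ContinuousOn u' (Icc a b))
    (hper : u a = u b) (hmean : ∀ i, ∫ t in a..b, u t i = 0) :
    (2 * π / (b - a)) ^ 2 * ∫ t in a..b, u t ⬝ᵥ Q *ᵥ u t ≤ ∫ t in a..b, u' t ⬝ᵥ Q *ᵥ u' t := by
  obtain ⟨B, hB⟩ := hQ.exists_dotProduct_mulVec_self_eq_sum_sq
  have hcont : ContinuousOn u (Icc a b) := fun t ht => (hu t ht).continuousAt.continuousWithinAt
  have hBu : ∀ j, ∀ t ∈ Icc a b, HasDerivAt (fun s => (B *ᵥ u s) j) ((B *ᵥ u' t) j) t :=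
    fun j t ht => HasDerivAt.fun_sum fun i _ => ((hasDerivAt_pi.1 (hu t ht)) i).const_mul (B j i)
  have hBcont : ∀ {w : ℝ → ι → ℝ}, ContinuousOn w (Icc a b) → ∀ j,
      ContinuousOn (fun t => (B *ᵥ w t) j) (Icc a b) := fun hw j =>
    (continuous_apply j).comp_continuousOn
      ((continuous_const.matrix_mulVec continuous_id).comp_continuousOn hw)
  have hBmean : ∀ j, ∫ t in a..b, (B *ᵥ u t) j = 0 := by
    intro j
    simp only [mulVec, dotProduct]
    rw [intervalIntegral.integral_finsetSum fun i _ => ?_]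
    · simp [hmean]
    · exact ((continuousOn_pi.1 hcont i).intervalIntegrable_of_Icc hab.le).const_mul _
  have hsq_int : ∀ {w : ℝ → ι → ℝ}, ContinuousOn w (Icc a b) → ∀ j,
      IntervalIntegrable (fun t => (B *ᵥ w t) j ^ 2) volume a b := fun hw j =>
    ((hBcont hw j).pow 2).intervalIntegrable_of_Icc hab.le
  simp_rw [hB]
  rw [intervalIntegral.integral_finsetSum fun j _ => hsq_int hcont j,
    intervalIntegral.integral_finsetSum fun j _ => hsq_int hu' j, mul_sum]
  exact sum_le_sum fun j _ =>
    wirtinger_inequality_real hab (hBu j) (hBcont hu' j) (by rw [hper]) (hBmean j)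

theorem Matrix.PosDef.integral_dotProduct_mulVec_pos {ι : Type*} [Fintype ι] {Q : Matrix ι ι ℝ}
    (hQ : Q.PosDef) {a b : ℝ} (hab : a ≤ b) {u : ℝ → ι → ℝ}
    (hq : IntervalIntegrable (fun t => u t ⬝ᵥ Q *ᵥ u t) volume a b)
    (hne : ∫ t in a..b, ∑ i, u t i ^ 2 ≠ 0) :
    0 < ∫ t in a..b, u t ⬝ᵥ Q *ᵥ u t := by
  have hnn : ∀ v, 0 ≤ v ⬝ᵥ Q *ᵥ v := hQ.posSemidef.dotProduct_mulVec_nonneg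
  refine (intervalIntegral.integral_nonneg hab fun t _ => hnn _).lt_of_ne fun h0 => hne ?_
  rw [eq_comm, intervalIntegral.integral_eq_zero_iff_of_le_of_nonneg_ae hab
    (ae_of_all _ fun t => hnn _) hq] at h0
  rw [intervalIntegral.integral_of_le hab]
  refine integral_eq_zero_of_ae ?_
  filter_upwards [h0] with t ht
  have hut : u t = 0 := by
    by_contra hut
    exact (hQ.dotProduct_mulVec_pos hut).ne' ht
  simp [hut]

section Trajectory

variable {E F : Type*} [NormedAddCommGroup E] [NormedSpace ℝ E] [NormedAddCommGroup F]
  [NormedSpace ℝ F]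

noncomputable def lieDeriv (h : E → F) (f : E → E) (y : E) : F := fderiv ℝ h y (f y)

variable {Ω : Set E} {f : E → E} {h : E → F} {x : ℝ → E}

theorem hasDerivAt_comp_lieDeriv (hΩ : IsOpen Ω) (hh : ContDiffOn ℝ 1 h Ω) {t : ℝ}
    (hxΩ : x t ∈ Ω) (hx : HasDerivAt x (f (x t)) t) :
    HasDerivAt (fun s => h (x s)) (lieDeriv h f (x t)) t :=
  ((hh.differentiableOn one_ne_zero).differentiableAt (hΩ.mem_nhds hxΩ)).hasFDerivAt.comp_hasDerivAt
    t hx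

theorem continuous_lieDeriv_comp (hΩ : IsOpen Ω) (hh : ContDiffOn ℝ 1 h Ω)
    (hf : ContinuousOn f Ω) (hx : Continuous x) (hxΩ : ∀ t, x t ∈ Ω) :
    Continuous fun t => lieDeriv h f (x t) :=
  ((hh.continuousOn_fderiv_of_isOpen hΩ le_rfl).comp_continuous hx hxΩ).clm_apply
    (hf.comp_continuous hx hxΩ)

theorem integral_lieDeriv_comp_eq_zero [CompleteSpace F] (hΩ : IsOpen Ω) (hh : ContDiffOn ℝ 1 h Ω)
    (hf : ContinuousOn f Ω) (hxΩ : ∀ t, x t ∈ Ω) (hx : ∀ t, HasDerivAt x (f (x t)) t) {a b : ℝ}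
    (hxab : x a = x b) : ∫ t in a..b, lieDeriv h f (x t) = 0 := by
  have hxc : Continuous x := continuous_iff_continuousAt.2 fun t => (hx t).continuousAt
  rw [intervalIntegral.integral_eq_sub_of_hasDerivAt
    (fun t _ => hasDerivAt_comp_lieDeriv hΩ hh (hxΩ t) (hx t))
    ((continuous_lieDeriv_comp hΩ hh hf hxc hxΩ).intervalIntegrable a b), hxab, sub_self]

end Trajectory

theorem sos_period_bound_general {n m : ℕ} (Ω : Set (EuclideanSpace ℝ (Fin n))) (hΩ : IsOpen Ω)
    (f : EuclideanSpace ℝ (Fin n) → EuclideanSpace ℝ (Fin n)) (hf : ContDiffOn ℝ 1 f Ω)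
    (g : EuclideanSpace ℝ (Fin n) → (Fin m → ℝ))
    (hg : ∀ i, ContDiffOn ℝ 1 (fun y => g y i) Ω)
    (Q : Matrix (Fin m) (Fin m) ℝ) (hQ : Q.PosDef)
    (V : EuclideanSpace ℝ (Fin n) → ℝ) (hV : ContDiffOn ℝ 1 V Ω)
    (C : ℝ)
    (hineq : ∀ x ∈ Ω,
      C * (g x ⬝ᵥ Q.mulVec (g x))
        - ((fun i => fderiv ℝ (fun y => g y i) x (f x)) ⬝ᵥ
            Q.mulVec (fun i => fderiv ℝ (fun y => g y i) x (f x)))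
        + fderiv ℝ V x (f x) ≥ 0)
    (x : ℝ → EuclideanSpace ℝ (Fin n)) (hxΩ : ∀ t, x t ∈ Ω)
    (hsol : ∀ t, HasDerivAt x (f (x t)) t)
    (T : ℝ) (hT : 0 < T) (hper : ∀ t, x (t + T) = x t)
    (hmean : ∀ i, (∫ t in (0:ℝ)..T, g (x t) i) = 0)
    (hnonzero : (∫ t in (0:ℝ)..T, ∑ i, (g (x t) i) ^ 2) ≠ 0) :
    2 * π / Real.sqrt C ≤ T := by
  have hxc : Continuous x := continuous_iff_continuousAt.2 fun t => (hsol t).continuousAt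
  have hx0T : x 0 = x T := by simpa using (hper 0).symm
  set φ : ℝ → Fin m → ℝ := fun t => g (x t)
  set ψ : ℝ → Fin m → ℝ := fun t i => lieDeriv (fun y => g y i) f (x t)
  have hφ : ∀ t, HasDerivAt φ (ψ t) t := fun t =>
    hasDerivAt_pi.2 fun i => hasDerivAt_comp_lieDeriv hΩ (hg i) (hxΩ t) (hsol t)
  have hψ : Continuous ψ :=
    continuous_pi fun i => continuous_lieDeriv_comp hΩ (hg i) hf.continuousOn hxc hxΩ
  have hφc : Continuous φ := continuous_iff_continuousAt.2 fun t => (hφ t).continuousAt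
  have hq : Continuous fun t => φ t ⬝ᵥ Q *ᵥ φ t := by fun_prop
  have hr : Continuous fun t => ψ t ⬝ᵥ Q *ᵥ ψ t := by fun_prop
  have hWirtinger := hQ.posSemidef.wirtinger_inequality hT (fun t _ => hφ t) hψ.continuousOn
    (by simp only [φ, hx0T]) hmean
  have hEnergy : ∫ t in (0:ℝ)..T, ψ t ⬝ᵥ Q *ᵥ ψ t ≤ C * ∫ t in (0:ℝ)..T, φ t ⬝ᵥ Q *ᵥ φ t := by
    have h : 0 ≤ ∫ t in (0:ℝ)..T,
        (C * (φ t ⬝ᵥ Q *ᵥ φ t) - ψ t ⬝ᵥ Q *ᵥ ψ t + lieDeriv V f (x t)) :=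
      intervalIntegral.integral_nonneg hT.le fun t _ => hineq (x t) (hxΩ t)
    rw [intervalIntegral.integral_add, intervalIntegral.integral_sub,
      intervalIntegral.integral_const_mul,
      integral_lieDeriv_comp_eq_zero hΩ hV hf.continuousOn hxΩ hsol hx0T] at h
    · linarith
    · exact (hq.const_mul C).intervalIntegrable 0 T
    · exact hr.intervalIntegrable 0 T
    · exact ((hq.const_mul C).sub hr).intervalIntegrable 0 T
    · exact (continuous_lieDeriv_comp hΩ hV hf.continuousOn hxc hxΩ).intervalIntegrable 0 T
  have hpos :=
    hQ.integral_dotProduct_mulVec_pos hT.le (hq.intervalIntegrable (μ := volume) 0 T) hnonzero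
  have hsq : (2 * π / T) ^ 2 ≤ C := by
    rw [sub_zero] at hWirtinger
    exact le_of_mul_le_mul_right (hWirtinger.trans hEnergy) hpos
  have hroot : 2 * π / T ≤ √C := Real.le_sqrt_of_sq_le hsq
  have hC : 0 < √C := (by positivity : 0 < 2 * π / T).trans_le hroot
  rw [div_le_iff₀ hT] at hroot
  rw [div_le_iff₀ hC]
  linarith

/-- Matrix version of the period bound (Proposition 2 of the paper): if
`C gᵀQg − (Dg·f)ᵀQ(Dg·f) + DV·f ≥ 0` on `Ω` for a positive definite matrix `Q`, then
every `T`-periodic solution of `x' = f(x)` in `Ω` along which `g` has zero mean but is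
not identically zero satisfies `T ≥ 2π/√C`. -/
theorem sos_period_bound {n m : ℕ} (Ω : Set (EuclideanSpace ℝ (Fin n))) (hΩ : IsOpen Ω)
    (f : EuclideanSpace ℝ (Fin n) → EuclideanSpace ℝ (Fin n)) (hf : ContDiffOn ℝ 1 f Ω)
    (g : EuclideanSpace ℝ (Fin n) → (Fin m → ℝ))
    (hg : ∀ i, ContDiffOn ℝ 1 (fun y => g y i) Ω)
    (Q : Matrix (Fin m) (Fin m) ℝ) (hQ : Q.PosDef)
    (V : EuclideanSpace ℝ (Fin n) → ℝ) (hV : ContDiffOn ℝ 1 V Ω)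
    (C : ℝ) (hC : 0 < C)
    (hineq : ∀ x ∈ Ω,
      C * (g x ⬝ᵥ Q.mulVec (g x))
        - ((fun i => fderiv ℝ (fun y => g y i) x (f x)) ⬝ᵥ
            Q.mulVec (fun i => fderiv ℝ (fun y => g y i) x (f x)))
        + fderiv ℝ V x (f x) ≥ 0)
    (x : ℝ → EuclideanSpace ℝ (Fin n)) (hxΩ : ∀ t, x t ∈ Ω)
    (hsol : ∀ t, HasDerivAt x (f (x t)) t)
    (T : ℝ) (hT : 0 < T) (hper : ∀ t, x (t + T) = x t)
    (hmean : ∀ i, (∫ t in (0:ℝ)..T, g (x t) i) = 0)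
    (hnonzero : (∫ t in (0:ℝ)..T, ∑ i, (g (x t) i) ^ 2) ≠ 0) :
    2 * π / Real.sqrt C ≤ T :=
  sos_period_bound_general Ω hΩ f hf g hg Q hQ V hV C hineq x hxΩ hsol T hT hper hmean hnonzero
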